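/- Let p be a prime, let K be a finite extension of ℚ_p with valuation ring V, let ϖ be a uniformizer of V, and let q be the cardinality of the residue field of V. Let S be an integrally closed integral domain which is a V-algebra containing V (so that K embeds into the fraction field of S). Let E, α ∈ S satisfy E·α^{q−1} = −ϖ, let k ≥ 0 and m ≥ 0 be integers, and let g ∈ K satisfy g^{q−1} ∈ ϖ^{p^k + m(q−1)}·V (equivalently, val(g) ≥ m + p^k/(q−1) for the valuation normalized by val(ϖ) = 1). Then there exists s ∈ S such that g = ϖ^m · α^{p^k} · s; that is, the element g·α^{−p^k} of the fraction field of S lies in ϖ^m S. -/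

import Mathlib

/-!
Put `d = ϖ^m α^(p^k)`. Raising `ϖ = -E α^(q-1)` to the power `p^k` gives
`g^(q-1) = v (-E)^(p^k) d^(q-1)` with `v (-E)^(p^k) ∈ S`, so `g / d` is a root of the monic
polynomial `X^(q-1) - v (-E)^(p^k)` over `S`; as `S` is integrally closed, `g / d ∈ S`.
-/

theorem IsIntegrallyClosed.exists_algebraMap_eq_of_pow_eq {S K : Type*} [CommRing S]
    [Field K] [Algebra S K] [IsIntegrallyClosed S] [IsFractionRing S K]
    {n : ℕ} (hn : n ≠ 0) {t : K} {c : S} (ht : t ^ n = algebraMap S K c) :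
    ∃ s : S, algebraMap S K s = t :=
  IsIntegrallyClosed.isIntegral_iff.mp <|
    IsIntegral.of_pow (Nat.pos_of_ne_zero hn) (ht ▸ isIntegral_algebraMap)

theorem IsIntegrallyClosed.exists_eq_mul_of_pow_eq_mul_pow {S K : Type*} [CommRing S]
    [Field K] [Algebra S K] [IsIntegrallyClosed S] [IsFractionRing S K]
    {n : ℕ} (hn : n ≠ 0) {x : K} {c d : S} (hx : x ^ n = algebraMap S K (c * d ^ n)) :
    ∃ s : S, x = algebraMap S K (d * s) := by
  rcases eq_or_ne d 0 with rfl | hd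
  · refine ⟨0, ?_⟩
    rw [zero_pow hn, mul_zero, map_zero] at hx
    rw [zero_mul, map_zero, ← pow_eq_zero_iff hn, hx]
  have hd' : algebraMap S K d ≠ 0 :=
    (map_ne_zero_iff _ (IsFractionRing.injective S K)).mpr hd
  obtain ⟨s, hs⟩ := exists_algebraMap_eq_of_pow_eq (t := x / algebraMap S K d) (c := c) hn <| by
    rw [div_pow, hx, map_mul, map_pow, mul_div_cancel_right₀ _ (pow_ne_zero n hd')]
  exact ⟨s, by rw [map_mul, hs, mul_div_cancel₀ _ hd']⟩

theorem gauss_sum_integrality_general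
    (p : ℕ)
    (K : Type*) [Field K]
    (V : Type*) [CommRing V] [IsDomain V] [IsDiscreteValuationRing V]
    [Algebra V K]
    (ϖ : V)
    (q : ℕ) [Fintype (IsLocalRing.ResidueField V)]
    (hq : q = Fintype.card (IsLocalRing.ResidueField V))
    (S : Type*) [CommRing S] [IsDomain S] [IsIntegrallyClosed S] [Algebra V S]
    (ι : K →+* FractionRing S)
    (hι : ∀ v : V, ι (algebraMap V K v)
      = algebraMap S (FractionRing S) (algebraMap V S v))
    (E α : S) (hEα : E * α ^ (q - 1) = algebraMap V S (-ϖ))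
    (k m : ℕ) (g : K)
    (hg : ∃ v : V, g ^ (q - 1) = algebraMap V K (ϖ ^ (p ^ k + m * (q - 1)) * v)) :
    ∃ s : S, ι g = algebraMap S (FractionRing S)
      (algebraMap V S (ϖ ^ m) * α ^ (p ^ k) * s) := by
  obtain ⟨v, hv⟩ := hg
  have hq1 : q - 1 ≠ 0 := by
    have := hq ▸ (Fintype.one_lt_card : 1 < Fintype.card (IsLocalRing.ResidueField V))
    omega
  have hϖ : algebraMap V S ϖ = -E * α ^ (q - 1) := by
    rw [neg_mul, hEα, map_neg, neg_neg]
  apply IsIntegrallyClosed.exists_eq_mul_of_pow_eq_mul_pow hq1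
    (c := algebraMap V S v * (-E) ^ p ^ k)
  rw [← map_pow, hv, hι, map_mul, map_pow, map_pow, hϖ]
  congr 1
  ring

/-- Let `p` be a prime, `K` a finite extension of `ℚ_p` with valuation ring `V`
(a discrete valuation ring with fraction field `K`), `ϖ` a uniformizer of `V` and
`q` the cardinality of the residue field of `V`.  Let `S` be an integrally closed
integral domain which is a `V`-algebra containing `V`, so that `K` embeds into the
fraction field of `S` via a ring homomorphism `ι` compatible with `V → S`.
Let `E, α ∈ S` satisfy `E * α^(q-1) = -ϖ`, let `k, m ≥ 0` be integers and let
`g ∈ K` satisfy `g^(q-1) ∈ ϖ^(p^k + m(q-1)) · V`.  Then there exists `s ∈ S`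
such that `g = ϖ^m · α^(p^k) · s` in the fraction field of `S`. -/
theorem gauss_sum_integrality
    (p : ℕ) [Fact p.Prime]
    (K : Type*) [Field K] [Algebra ℚ_[p] K] [FiniteDimensional ℚ_[p] K]
    (V : Type*) [CommRing V] [IsDomain V] [IsDiscreteValuationRing V]
    [Algebra V K] [IsFractionRing V K]
    (ϖ : V) (hϖ : Irreducible ϖ)
    (q : ℕ) [Fintype (IsLocalRing.ResidueField V)]
    (hq : q = Fintype.card (IsLocalRing.ResidueField V))
    (S : Type*) [CommRing S] [IsDomain S] [IsIntegrallyClosed S] [Algebra V S]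
    (hinj : Function.Injective (algebraMap V S))
    (ι : K →+* FractionRing S)
    (hι : ∀ v : V, ι (algebraMap V K v)
      = algebraMap S (FractionRing S) (algebraMap V S v))
    (E α : S) (hEα : E * α ^ (q - 1) = algebraMap V S (-ϖ))
    (k m : ℕ) (g : K)
    (hg : ∃ v : V, g ^ (q - 1) = algebraMap V K (ϖ ^ (p ^ k + m * (q - 1)) * v)) :
    ∃ s : S, ι g = algebraMap S (FractionRing S)
      (algebraMap V S (ϖ ^ m) * α ^ (p ^ k) * s) :=
  gauss_sum_integrality_general p K V ϖ q hq S ι hι E α hEα k m g hg
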